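/- Let t be a semifinite template and let φ be a strictly positive harmonic function on the graph Z(t). Then φ(λ) = +∞ for every λ ∈ J(t). -/

import Mathlib

/-!
Common definitions: the zigzag graph on binary words, templates and their coideals,
zigzag flanges and sections, the functions `F_λ(u)` and `φ_{t,w}`, and harmonic /
semifinite / indecomposable functions on subgraphs of the zigzag graph.
-/

open scoped ENNReal NNReal

namespace Zigzag

/-- Binary words: `true` is `+`, `false` is `−`. -/
abbrev BW := List Bool

/-- `CoveredBy a b`: `b` covers `a` in the subword order, i.e. `|b| = |a| + 1` and `a`
is a subword of `b`; these are the edges of the zigzag graph. -/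
def CoveredBy (a b : BW) : Prop := a.Sublist b ∧ b.length = a.length + 1

/-- The set of upper neighbours of `a` lying in `S` is finite. -/
lemma upSet_finite (S : Set BW) (a : BW) : {b | b ∈ S ∧ CoveredBy a b}.Finite :=
  (List.finite_length_eq Bool (a.length + 1)).subset (fun _ hb => hb.2.2)

/-- The finset of upper neighbours of `a` inside `S`. -/
noncomputable def upFinset (S : Set BW) (a : BW) : Finset BW :=
  (upSet_finite S a).toFinset

/-- A `[0,∞]`-valued function is harmonic on `S ⊆ Z` (with the edges induced from the
zigzag graph) if its value at any vertex of `S` equals the sum of its values at the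
upper neighbours lying in `S`. -/
def HarmonicOn (S : Set BW) (φ : BW → ℝ≥0∞) : Prop :=
  ∀ a ∈ S, φ a = ∑ b ∈ upFinset S a, φ b

/-- A template: a nonempty sequence of clusters with alternating signs, each cluster
being a sign (`true` = `+`, `false` = `−`) with a multiplicity in `{1,2,…} ∪ {∞}`,
containing at least one infinite cluster. -/
structure Template where
  clusters : List (Bool × ℕ∞)
  ne : clusters ≠ []
  pos : ∀ c ∈ clusters, c.2 ≠ 0
  alternating : clusters.Chain' fun c d => c.1 ≠ d.1
  hasInf : ∃ c ∈ clusters, c.2 = ⊤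

/-- The binary word obtained from a list of clusters by replacing every infinite
multiplicity by `N` (and keeping the finite multiplicities). -/
def clWord (cs : List (Bool × ℕ∞)) (N : ℕ) : BW :=
  (cs.map fun c => List.replicate (if c.2 = ⊤ then N else c.2.toNat) c.1).flatten

/-- The coideal generated by a list of clusters: all binary words that are subwords of
some instantiation. -/
def Zcl (cs : List (Bool × ℕ∞)) : Set BW := {a | ∃ N, a.Sublist (clWord cs N)}

/-- The coideal `Z(t)` of the zigzag graph attached to a template `t`. -/
def Zt (t : Template) : Set BW := Zcl t.clusters

/-- The cluster in position `i` of `t` is a separating cluster: a one-symbol finite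
cluster which is not outermost and whose two neighbours are infinite clusters
(necessarily of the same sign). -/
def Template.isSep (t : Template) (i : ℕ) : Prop :=
  0 < i ∧ i + 1 < t.clusters.length ∧
  (t.clusters.getD i (true, 1)).2 = 1 ∧
  (t.clusters.getD (i - 1) (true, 1)).2 = ⊤ ∧
  (t.clusters.getD (i + 1) (true, 1)).2 = ⊤

/-- A template is finite if all its finite clusters are separating; otherwise it is
semifinite. -/
def Template.IsFiniteTemplate (t : Template) : Prop :=
  ∀ i < t.clusters.length, (t.clusters.getD i (true, 1)).2 ≠ ⊤ → t.isSep i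

/-- The number of infinite clusters of a template. -/
def Template.numInf (t : Template) : ℕ :=
  (t.clusters.filter fun c => decide (c.2 = ⊤)).length

/-- Position `p` of `t` carries a finite non-separating cluster, i.e. a cluster
contributing to the zigzag flange of `t`. -/
def IsFlangePos (t : Template) (p : ℕ) : Prop :=
  p < t.clusters.length ∧ (t.clusters.getD p (true, 1)).2 ≠ ⊤ ∧ ¬t.isSep p

/-- Decrease by one the multiplicity of the cluster in position `p`. -/
def decAt (cs : List (Bool × ℕ∞)) (p : ℕ) : List (Bool × ℕ∞) :=
  cs.set p ((cs.getD p (true, 1)).1, (cs.getD p (true, 1)).2 - 1)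

/-- The coideal `J(t)`: the union of the coideals `Z(r)` over all `r` obtained from `t`
by removing a single symbol from a cluster corresponding to a block of a binary word
from the zigzag flange of `t` (no merging of clusters is needed to generate `Z(r)`). -/
def Jt (t : Template) : Set BW :=
  {a | ∃ p, IsFlangePos t p ∧ a ∈ Zcl (decAt t.clusters p)}

/-- The canonical splitting of a template `t` into its zigzag flange
`fl(t) = (a₀, …, a_k)` (given by the lists `A 0, …, A k` of clusters, each consisting
of finite non-separating clusters of `t`) and its sections `t₁, …, t_k` (the maximal
groups of consecutive clusters forming finite templates), so that
`t = (a₀, t₁, a₁, …, a_{k−1}, t_k, a_k)`.  The two `interior` conditions express the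
maximality of the decomposition. -/
structure SectionData (t : Template) where
  k : ℕ
  A : Fin (k + 1) → List (Bool × ℕ∞)
  T : Fin k → Template
  concat : t.clusters
      = A 0 ++ (List.ofFn fun i : Fin k => (T i).clusters ++ A i.succ).flatten
  finA : ∀ j, ∀ c ∈ A j, c.2 ≠ ⊤
  secFin : ∀ i, (T i).IsFiniteTemplate
  interior_ne : ∀ j : Fin (k + 1), (j : ℕ) ≠ 0 → (j : ℕ) ≠ k → A j ≠ []
  interior_not_sep : ∀ j : Fin (k + 1), (j : ℕ) ≠ 0 → (j : ℕ) ≠ k →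
      ∀ s : Bool, A j ≠ [(s, 1)]

/-- The binary word corresponding to a list of finite clusters (a flange word). -/
def flangeWord (cs : List (Bool × ℕ∞)) : BW :=
  (cs.map fun c => List.replicate c.2.toNat c.1).flatten

/-- `a₀ ⊔ ℓ 1 ⊔ a₁ ⊔ … ⊔ ℓ k ⊔ a_k` (empty flange words disappear). -/
def assemble {t : Template} (D : SectionData t) (ℓ : Fin D.k → BW) : BW :=
  flangeWord (D.A 0) ++ (List.ofFn fun i : Fin D.k => ℓ i ++ flangeWord (D.A i.succ)).flatten

/-- `ℓ` is a decomposition of `a` along the sections of `t`: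
`bw(a) = a₀ ⊔ bw(ℓ 1) ⊔ a₁ ⊔ … ⊔ bw(ℓ k) ⊔ a_k` with `ℓ i ∈ Z(tᵢ)`. -/
def decompOf {t : Template} (D : SectionData t) (a : BW) (ℓ : Fin D.k → BW) : Prop :=
  (∀ i, ℓ i ∈ Zt (D.T i)) ∧ a = assemble D ℓ

/-- The signs of the infinite clusters of a list of clusters, in order. -/
def infSigns (cs : List (Bool × ℕ∞)) : List Bool :=
  (cs.filter fun c => decide (c.2 = ⊤)).map Prod.fst

/-- The number of weights consumed by the sections preceding the `i`-th one. -/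
def secOffset {t : Template} (D : SectionData t) (i : Fin D.k) : ℕ :=
  ∑ i' ∈ Finset.univ.filter (· < i), (infSigns (D.T i').clusters).length

/-- The part `vᵢ` of the tuple of weights `w` corresponding to the infinite clusters of
the `i`-th section, as a sequence of (sign, weight) pairs. -/
def vD {t : Template} (D : SectionData t) (w : List ℝ) (i : Fin D.k) : List (Bool × ℝ) :=
  (infSigns (D.T i).clusters).zip (w.drop (secOffset D i))

/-- `F_λ(u)` for a finite sequence `u` of (sign, length) pairs and a zigzag `λ`
(encoded by its binary word `a`, so that `λ` has `a.length + 1` boxes): the sum, over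
all decompositions of `λ` into `u.length` consecutive (possibly empty) zigzags
`λ(1), …, λ(m)` with `λ(i)` a row when the `i`-th sign is `+` and a column when it is
`−`, of `u₁ ^ |λ(1)| ⋯ u_m ^ |λ(m)|`.  A decomposition is recorded by the tuple `c` of
the numbers of boxes of the pieces; the row/column constraint says that the letters of
`a` strictly inside the `i`-th group of boxes all equal the `i`-th sign. -/
noncomputable def Fword (u : List (Bool × ℝ)) (a : BW) : ℝ :=
  ∑ c ∈ (Finset.Nat.antidiagonalTuple u.length (a.length + 1)).filter
      (fun c => ∀ i : Fin u.length,
        (a.drop (∑ i' ∈ Finset.univ.filter (· < i), c i')).take (c i - 1)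
          = List.replicate (c i - 1) (u.get i).1),
    ∏ i, (u.get i).2 ^ c i

open Classical in
/-- The function `φ_{t,w}` attached to a semifinite zigzag growth model `(t, w)`:
it equals `+∞` on `J(t)`, and on `Z(t) ∖ J(t)` it equals
`F_{λ^{(1)}}(v₁) ⋯ F_{λ^{(k)}}(v_k)`, where `(λ^{(1)}, …, λ^{(k)})` is the (unique)
decomposition of `λ` along the sections of `t` (it is `0` off `Z(t)`). -/
noncomputable def phiTW (t : Template) (D : SectionData t) (w : List ℝ) (a : BW) : ℝ≥0∞ :=
  if a ∉ Zt t then 0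
  else if a ∈ Jt t then ⊤
  else if h : ∃ ℓ : Fin D.k → BW, decompOf D a ℓ then
    ENNReal.ofReal (∏ i, Fword (vD D w i) (h.choose i))
  else 0

section Kcone

/-- The relation `λ = ∑_{μ : λ ↗ μ} μ` (within `S`) as an element of the free module. -/
noncomputable def relOf (S : Set BW) (a : BW) : BW →₀ ℝ :=
  Finsupp.single a 1 - ∑ b ∈ upFinset S a, Finsupp.single b 1

/-- The submodule of relations defining `K(S)`. -/
noncomputable def Krel (S : Set BW) : Submodule ℝ (BW →₀ ℝ) :=
  Submodule.span ℝ {f | ∃ a ∈ S, f = relOf S a}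

/-- The class of `f` in `K(S) = (⊕_{λ ∈ S} ℝ λ) ⧸ (relations)`. -/
noncomputable def kmk (S : Set BW) (f : BW →₀ ℝ) : (BW →₀ ℝ) ⧸ Krel S :=
  Submodule.Quotient.mk f

/-- Nonnegative formal combinations of vertices of `S`. -/
def NonnegOn (S : Set BW) (f : BW →₀ ℝ) : Prop :=
  (∀ x, 0 ≤ f x) ∧ ∀ x ∈ f.support, x ∈ S

/-- The cone `K⁺(S)` spanned by the vertices of `S` in `K(S)`. -/
noncomputable def Kpos (S : Set BW) : Set ((BW →₀ ℝ) ⧸ Krel S) :=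
  kmk S '' {f | NonnegOn S f}

/-- The order defined by the cone `K⁺(S)`: `x ≤_K y` iff `y − x ∈ K⁺(S)`. -/
def leK (S : Set BW) (x y : (BW →₀ ℝ) ⧸ Krel S) : Prop := y - x ∈ Kpos S

/-- The value of (the canonical extension of) `φ` at a nonnegative combination of
vertices. -/
noncomputable def phiHat (φ : BW → ℝ≥0∞) (f : BW →₀ ℝ) : ℝ≥0∞ :=
  ∑ x ∈ f.support, ENNReal.ofReal (f x) * φ x

/-- `φ` is finite on `S`. -/
def FiniteOn (S : Set BW) (φ : BW → ℝ≥0∞) : Prop := ∀ a ∈ S, φ a ≠ ⊤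

/-- `φ` is a semifinite function on (the graph) `S`: it is not everywhere finite, and
its value at any element `a` of the cone `K⁺` is the supremum of its values at the
elements `b ≤_K a` of the cone where it is finite. -/
def SemifiniteOn (S : Set BW) (φ : BW → ℝ≥0∞) : Prop :=
  (∃ a ∈ S, φ a = ⊤) ∧
  ∀ f : BW →₀ ℝ, NonnegOn S f →
    phiHat φ f =
      ⨆ g ∈ {g : BW →₀ ℝ |
        NonnegOn S g ∧ leK S (kmk S g) (kmk S f) ∧ phiHat φ g ≠ ⊤}, phiHat φ g

/-- A semifinite harmonic function `φ` on `S` is indecomposable if any finite or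
semifinite harmonic function `φ′ ≤ φ` on `S` which does not vanish identically on the
finiteness ideal of `φ` is a constant multiple of `φ` on that ideal. -/
def IndecSemifiniteOn (S : Set BW) (φ : BW → ℝ≥0∞) : Prop :=
  ∀ φ' : BW → ℝ≥0∞, HarmonicOn S φ' →
    (FiniteOn S φ' ∨ SemifiniteOn S φ') →
    (∀ a ∈ S, φ' a ≤ φ a) →
    (∃ a ∈ S, φ a ≠ ⊤ ∧ φ' a ≠ 0) →
    ∃ c : ℝ≥0, ∀ a ∈ S, φ a ≠ ⊤ → φ' a = (c : ℝ≥0∞) * φ a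

end Kcone

end Zigzag

namespace Zigzag

/-!
Fix a flange position `p` of `t` and call an *instance* of `t` any word `κ = t[N₁, …, N_r]`
obtained by giving each infinite cluster a positive multiplicity; let `ν` be `κ` with one
symbol of cluster `p` removed. Inside `Z(t)` the upper covers of `κ` are the words `κᵢ`
obtained by enlarging one infinite cluster `i`, while the upper covers of `ν` include `κ` and
the words `νᵢ = κᵢ` minus that symbol of cluster `p`. These are pairwise distinct: two
of them can only coincide when cluster `p` is a single symbol between two infinite clusters
`p - 1`, `p + 1`, that is, when `p` is separating. Harmonicity therefore gives
`φ κ ≤ ∑ φ κᵢ` and `φ κ + ∑ φ νᵢ ≤ φ ν`, and induction over all instances yields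
`n * φ κ ≤ φ ν` for every `n`. As `φ κ > 0`, `φ ν = ∞`; since a harmonic function decreases
along the subword order, it is infinite on every subword of `ν`, and these make up `J(t)`.
-/

open scoped List

abbrev Blocks := List (Bool × ℕ)

def word (l : Blocks) : BW := (l.map fun x => List.replicate x.2 x.1).flatten

@[simp] lemma word_nil : word [] = [] := rfl

@[simp] lemma word_cons (x : Bool × ℕ) (l : Blocks) :
    word (x :: l) = List.replicate x.2 x.1 ++ word l := rfl

@[simp] lemma word_append (l₁ l₂ : Blocks) : word (l₁ ++ l₂) = word l₁ ++ word l₂ := by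
  simp [word]

lemma length_word (l : Blocks) : (word l).length = (l.map Prod.snd).sum := by
  induction l <;> simp [*]

lemma head?_word_cons {x : Bool × ℕ} (l : Blocks) (hx : 0 < x.2) :
    (word (x :: l)).head? = some x.1 := by
  simp [List.head?_replicate, hx.ne']

/-- `l` is the run-length encoding of `word l`. -/
structure IsRuns (l : Blocks) : Prop where
  chain : (l.map Prod.fst).IsChain (· ≠ ·)
  pos : ∀ x ∈ l, 0 < x.2

def BlocksLE (l₁ l₂ : Blocks) : Prop := List.Forall₂ (fun a b => a.1 = b.1 ∧ a.2 ≤ b.2) l₁ l₂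

def bump (l : Blocks) (i : ℕ) : Blocks := l.modify i fun x => (x.1, x.2 + 1)

def cut (l : Blocks) (i : ℕ) : Blocks := l.modify i fun x => (x.1, x.2 - 1)

lemma _root_.List.replicate_append_cancel {α : Type*} {a : α} {u v : List α}
    (hu : u.head? ≠ some a) (hv : v.head? ≠ some a) :
    ∀ {m n : ℕ}, List.replicate m a ++ u = List.replicate n a ++ v → m = n ∧ u = v
  | 0, 0, h => ⟨rfl, by simpa using h⟩
  | 0, n + 1, h => absurd (show u.head? = some a by simp [List.replicate_succ] at h; simp [h]) hu
  | m + 1, 0, h => absurd (show v.head? = some a by simp [List.replicate_succ] at h; simp [← h]) hv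
  | m + 1, n + 1, h => by
    simp only [List.replicate_succ, List.cons_append, List.cons.injEq, true_and] at h
    simpa using List.replicate_append_cancel hu hv h

namespace IsRuns

lemma tail {x : Bool × ℕ} {l : Blocks} (h : IsRuns (x :: l)) : IsRuns l :=
  ⟨h.chain.tail, fun y hy => h.pos y (List.mem_cons_of_mem x hy)⟩

lemma of_append_left {l₁ l₂ : Blocks} (h : IsRuns (l₁ ++ l₂)) : IsRuns l₁ :=
  ⟨(List.map_append ▸ h.chain).left_of_append, fun x hx => h.pos x (List.mem_append_left _ hx)⟩

lemma of_append_right {l₁ l₂ : Blocks} (h : IsRuns (l₁ ++ l₂)) : IsRuns l₂ :=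
  ⟨(List.map_append ▸ h.chain).right_of_append,
    fun x hx => h.pos x (List.mem_append_right _ hx)⟩

lemma head?_word_tail_ne {x : Bool × ℕ} {l : Blocks} (h : IsRuns (x :: l)) :
    (word l).head? ≠ some x.1 := by
  cases l with
  | nil => simp
  | cons y l =>
    rw [head?_word_cons l (h.pos y (by simp))]
    simpa [eq_comm] using (List.isChain_cons_cons.mp h.chain).1

lemma eq_of_word_eq {l₁ l₂ : Blocks} (h₁ : IsRuns l₁) (h₂ : IsRuns l₂)
    (h : word l₁ = word l₂) : l₁ = l₂ := by
  induction l₁ generalizing l₂ with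
  | nil =>
    cases l₂ with
    | nil => rfl
    | cons y l₂ =>
      have := head?_word_cons l₂ (h₂.pos y (by simp))
      simp [← h] at this
  | cons x l₁ ih =>
    cases l₂ with
    | nil =>
      have := head?_word_cons l₁ (h₁.pos x (by simp))
      simp [h] at this
    | cons y l₂ =>
      have hxy : x.1 = y.1 := by
        have := head?_word_cons l₂ (h₂.pos y (by simp))
        rw [← h, head?_word_cons l₁ (h₁.pos x (by simp))] at this
        exact Option.some_injective _ this
      rw [word_cons, word_cons, hxy] at h
      obtain ⟨hm, hw⟩ :=
        List.replicate_append_cancel (hxy ▸ h₁.head?_word_tail_ne) h₂.head?_word_tail_ne h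
      rw [ih h₁.tail h₂.tail hw, Prod.ext hxy hm]

end IsRuns

lemma length_le_countP_of_sublist_word {c : BW} (hc : c.IsChain (· ≠ ·)) {l : Blocks}
    (h : c <+ word l) : c.length ≤ l.countP fun x => 0 < x.2 := by
  induction l generalizing c with
  | nil => simp_all
  | cons x l ih =>
    obtain ⟨c₁, c₂, rfl, h₁, h₂⟩ := List.sublist_append_iff.mp h
    obtain ⟨k, hk, rfl⟩ := List.sublist_replicate_iff.mp h₁
    have hk1 : k ≤ 1 := by
      rcases k with _ | _ | k
      · omega
      · omega
      · simp [List.replicate_succ] at hc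
    have := ih (hc.infix (List.suffix_append _ _).isInfix) h₂
    by_cases hx : 0 < x.2 <;> simp [hx] <;> omega

lemma map_fst_sublist_word {l : Blocks} (hl : ∀ x ∈ l, 0 < x.2) : l.map Prod.fst <+ word l := by
  induction l with
  | nil => simp
  | cons x l ih =>
    obtain ⟨n, hn⟩ := Nat.exists_eq_add_of_lt (hl x (by simp))
    simp only [List.map_cons, word_cons, hn, List.replicate_succ, List.cons_append]
    exact (ih fun y hy => hl y (by simp [hy])).trans (List.sublist_append_right _ _) |>.cons_cons _

lemma IsRuns.eq_of_word_eq_of_map_fst_eq {lo mid : Blocks} (hlo : IsRuns lo)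
    (hsign : mid.map Prod.fst = lo.map Prod.fst) (h : word mid = word lo) : mid = lo := by
  have hlen : mid.length = lo.length := by simpa using congrArg List.length hsign
  -- `word mid` has `lo.length` runs, so no block of `mid` is empty.
  have hcount := length_le_countP_of_sublist_word hlo.chain (h ▸ map_fst_sublist_word hlo.pos)
  have hpos : ∀ x ∈ mid, 0 < x.2 := by
    rw [List.length_map, ← hlen] at hcount
    simpa using List.countP_eq_length.mp (le_antisymm List.countP_le_length hcount)
  exact IsRuns.eq_of_word_eq ⟨hsign ▸ hlo.chain, hpos⟩ hlo h

namespace BlocksLE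

lemma refl (l : Blocks) : BlocksLE l l :=
  List.forall₂_same.mpr fun _ _ => ⟨rfl, le_rfl⟩

lemma map_fst {l₁ l₂ : Blocks} (h : BlocksLE l₁ l₂) : l₁.map Prod.fst = l₂.map Prod.fst := by
  induction h with
  | nil => rfl
  | cons hab _ ih => simp [hab.1, ih]

lemma word_sublist {l₁ l₂ : Blocks} (h : BlocksLE l₁ l₂) : word l₁ <+ word l₂ := by
  induction h with
  | nil => simp
  | cons hab _ ih =>
    rw [word_cons, word_cons, hab.1]
    exact ((List.replicate_sublist_replicate _).2 hab.2).append ih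

lemma sum_le {l₁ l₂ : Blocks} (h : BlocksLE l₁ l₂) :
    (l₁.map Prod.snd).sum ≤ (l₂.map Prod.snd).sum := by
  induction h with
  | nil => rfl
  | cons hab _ ih => simp only [List.map_cons, List.sum_cons]; omega

lemma eq_of_sum_le {l₁ l₂ : Blocks} (h : BlocksLE l₁ l₂)
    (hs : (l₂.map Prod.snd).sum ≤ (l₁.map Prod.snd).sum) : l₁ = l₂ := by
  induction h with
  | nil => rfl
  | cons hab htail ih =>
    simp only [List.map_cons, List.sum_cons] at hs
    have := sum_le htail
    rw [Prod.ext hab.1 (by omega), ih (by omega)]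

end BlocksLE

lemma exists_blocksLE_of_sublist_word {b : BW} {hi : Blocks} (h : b <+ word hi) :
    ∃ mid, BlocksLE mid hi ∧ b = word mid := by
  induction hi generalizing b with
  | nil => exact ⟨[], .nil, by simpa using h⟩
  | cons y hi ih =>
    obtain ⟨b₁, b₂, rfl, h₁, h₂⟩ := List.sublist_append_iff.mp h
    obtain ⟨k, hk, rfl⟩ := List.sublist_replicate_iff.mp h₁
    obtain ⟨mid, hmid, rfl⟩ := ih h₂
    exact ⟨(y.1, k) :: mid, .cons ⟨rfl, hk⟩ hmid, rfl⟩

lemma IsRuns.blocksLE_of_word_sublist {lo hi : Blocks} (hlo : IsRuns lo)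
    (hsign : lo.map Prod.fst = hi.map Prod.fst) (h : word lo <+ word hi) : BlocksLE lo hi := by
  obtain ⟨mid, hmid, hw⟩ := exists_blocksLE_of_sublist_word h
  rwa [← hlo.eq_of_word_eq_of_map_fst_eq (hmid.map_fst.trans hsign.symm) hw.symm]

lemma _root_.List.modify_append_left {α : Type*} {l₁ : List α} (l₂ : List α) {i : ℕ}
    (hi : i < l₁.length) (f : α → α) : (l₁ ++ l₂).modify i f = l₁.modify i f ++ l₂ := by
  induction l₁ generalizing i with
  | nil => simp at hi
  | cons a l₁ ih => cases i <;> simp_all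

lemma _root_.List.modify_append_right {α : Type*} (l₁ l₂ : List α) (i : ℕ) (f : α → α) :
    (l₁ ++ l₂).modify (l₁.length + i) f = l₁ ++ l₂.modify i f := by
  induction l₁ with
  | nil => simp
  | cons a l₁ ih => simp [Nat.add_right_comm _ 1, ih]

lemma map_fst_modify {l : Blocks} {f : Bool × ℕ → Bool × ℕ} (hf : ∀ x, (f x).1 = x.1) (i : ℕ) :
    (l.modify i f).map Prod.fst = l.map Prod.fst := by
  refine List.ext_getElem (by simp) fun j _ _ => ?_
  simp only [List.getElem_map, List.getElem_modify]
  split_ifs <;> simp [hf]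

@[simp] lemma map_fst_bump (l : Blocks) (i : ℕ) : (bump l i).map Prod.fst = l.map Prod.fst :=
  map_fst_modify (f := fun x => (x.1, x.2 + 1)) (fun _ => rfl) i

@[simp] lemma map_fst_cut (l : Blocks) (i : ℕ) : (cut l i).map Prod.fst = l.map Prod.fst :=
  map_fst_modify (f := fun x => (x.1, x.2 - 1)) (fun _ => rfl) i

lemma cut_bump_comm {l : Blocks} {i p : ℕ} (hip : i ≠ p) : cut (bump l i) p = bump (cut l p) i :=
  List.modify_modify_ne _ _ _ hip

lemma bump_cut {l : Blocks} {i : ℕ} (hi : ∀ hi : i < l.length, 0 < l[i].2) :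
    bump (cut l i) i = l := by
  refine List.ext_getElem (by simp [bump, cut]) fun j _ hj => ?_
  simp only [bump, cut, List.getElem_modify]
  split_ifs with hij
  · subst hij
    have := hi hj
    ext <;> simp; omega
  · rfl

lemma eq_of_bump_eq {l : Blocks} {i j : ℕ} (hi : i < l.length) (h : bump l i = bump l j) :
    i = j := by
  by_contra hij
  have := congrArg (·[i]?) h
  simp [bump, List.getElem?_modify_ne _ _ (Ne.symm hij), List.getElem?_eq_getElem hi] at this
  simpa using congrArg Prod.snd this

lemma blocksLE_bump (l : Blocks) (i : ℕ) : BlocksLE l (bump l i) := by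
  induction l generalizing i with
  | nil => simp [BlocksLE, bump]
  | cons x l ih =>
    cases i with
    | zero => exact .cons ⟨rfl, Nat.le_succ _⟩ (BlocksLE.refl l)
    | succ i => exact .cons ⟨rfl, le_rfl⟩ (ih i)

lemma blocksLE_cut (l : Blocks) (i : ℕ) : BlocksLE (cut l i) l := by
  induction l generalizing i with
  | nil => simp [BlocksLE, cut]
  | cons x l ih =>
    cases i with
    | zero => exact .cons ⟨rfl, Nat.sub_le _ _⟩ (BlocksLE.refl l)
    | succ i => exact .cons ⟨rfl, le_rfl⟩ (ih i)

lemma BlocksLE.exists_bump {l₁ l₂ : Blocks} (h : BlocksLE l₁ l₂)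
    (hs : (l₂.map Prod.snd).sum = (l₁.map Prod.snd).sum + 1) :
    ∃ i < l₁.length, l₂ = bump l₁ i := by
  induction h with
  | nil => simp at hs
  | @cons a b l₁ l₂ hab htail ih =>
    simp only [List.map_cons, List.sum_cons] at hs
    have := BlocksLE.sum_le htail
    by_cases hb : b.2 = a.2
    · obtain ⟨i, hi, rfl⟩ := ih (by omega)
      exact ⟨i + 1, by simpa using hi, by simp [bump, Prod.ext hab.1.symm hb]⟩
    · refine ⟨0, by simp, ?_⟩
      rw [← BlocksLE.eq_of_sum_le htail (by omega)]
      simp [bump, Prod.ext_iff, hab.1]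
      omega

lemma length_word_bump {l : Blocks} {i : ℕ} (hi : i < l.length) :
    (word (bump l i)).length = (word l).length + 1 := by
  induction l generalizing i with
  | nil => simp at hi
  | cons x l ih =>
    cases i with
    | zero => simp [bump]; omega
    | succ i =>
      have := ih (i := i) (by simpa using hi)
      simp only [bump, List.modify_succ_cons, word_cons, List.length_append] at this ⊢
      omega

lemma coveredBy_word_bump {l : Blocks} {i : ℕ} (hi : i < l.length) :
    CoveredBy (word l) (word (bump l i)) :=
  ⟨(blocksLE_bump l i).word_sublist, length_word_bump hi⟩

lemma IsRuns.modify {l : Blocks} (h : IsRuns l) {f : Bool × ℕ → Bool × ℕ}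
    (hf : ∀ x, (f x).1 = x.1) {i : ℕ} (hi : ∀ hi : i < l.length, 0 < (f l[i]).2) :
    IsRuns (l.modify i f) := by
  refine ⟨(map_fst_modify hf i).symm ▸ h.chain, fun x hx => ?_⟩
  obtain ⟨j, hj, rfl⟩ := List.mem_iff_getElem.mp hx
  rw [List.getElem_modify]
  split_ifs with hij
  · subst hij
    exact hi (by simpa using hj)
  · exact h.pos _ (List.getElem_mem _)

lemma isRuns_bump {l : Blocks} (h : IsRuns l) (i : ℕ) : IsRuns (bump l i) :=
  h.modify (f := fun x => (x.1, x.2 + 1)) (fun _ => rfl) fun _ => Nat.succ_pos _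

lemma isRuns_cut {l : Blocks} (h : IsRuns l) {i : ℕ} (hi : ∀ hi : i < l.length, 2 ≤ l[i].2) :
    IsRuns (cut l i) :=
  h.modify (f := fun x => (x.1, x.2 - 1)) (fun _ => rfl) fun h' => by have := hi h'; omega

lemma IsRuns.eq_of_word_bump_eq {l : Blocks} (h : IsRuns l) {i j : ℕ} (hi : i < l.length)
    (hw : word (bump l i) = word (bump l j)) : i = j :=
  eq_of_bump_eq hi ((isRuns_bump h i).eq_of_word_eq (isRuns_bump h j) hw)

lemma word_bump_cons_zero (y : Bool × ℕ) (l : Blocks) :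
    word (bump (y :: l) 0) = y.1 :: word (y :: l) := by
  simp [bump, List.replicate_succ]

lemma word_bump_append_singleton (l : Blocks) (y : Bool × ℕ) :
    word (bump (l ++ [y]) l.length) = word (l ++ [y]) ++ [y.1] := by
  rw [bump, ← Nat.add_zero l.length, List.modify_append_right]
  simp [List.replicate_succ']

lemma head?_word_bump_cons {z : Bool × ℕ} (hz : 0 < z.2) (B : Blocks) (k : ℕ) :
    (word (bump (z :: B) k)).head? = some z.1 := by
  cases k <;> simp [bump, List.head?_replicate, hz.ne']

lemma word_cut_bump_of_lt {F B : Blocks} {x : Bool × ℕ} (hx : x.2 = 1) {k : ℕ}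
    (hk : k < F.length) :
    word (cut (bump (F ++ x :: B) k) F.length) = word (bump F k) ++ word B := by
  have h : bump (F ++ x :: B) k = bump F k ++ x :: B := List.modify_append_left _ hk _
  rw [h, cut, ← show (bump F k).length + 0 = F.length by simp [bump], List.modify_append_right]
  simp [hx]

lemma word_cut_bump_of_gt {F B : Blocks} {x : Bool × ℕ} (hx : x.2 = 1) (k : ℕ) :
    word (cut (bump (F ++ x :: B) (F.length + 1 + k)) F.length) = word F ++ word (bump B k) := by
  have h : bump (F ++ x :: B) (F.length + 1 + k) = F ++ x :: bump B k := by
    rw [bump, Nat.add_assoc, List.modify_append_right, Nat.add_comm, List.modify_succ_cons]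
    rfl
  rw [h, cut, ← Nat.add_zero F.length, List.modify_append_right]
  simp [hx]

lemma index_eq_of_word_bump_append_eq {F B : Blocks} {y z : Bool × ℕ}
    (hF : IsRuns (F ++ [y])) (hB : IsRuns (z :: B)) (hyz : y.1 = z.1) {k l : ℕ}
    (hk : k < F.length + 1)
    (h : word (bump (F ++ [y]) k) ++ word (z :: B) = word (F ++ [y]) ++ word (bump (z :: B) l)) :
    k = F.length ∧ l = 0 := by
  have hlen := length_word_bump (l := F ++ [y]) (i := k) (by simpa using hk)
  rcases List.append_eq_append_iff.mp h with ⟨c, h₁, -⟩ | ⟨c, h₁, h₂⟩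
  · have := congrArg List.length h₁
    simp only [List.length_append] at this
    omega
  have hc : c.length = 1 := by
    have := congrArg List.length h₁
    simp only [List.length_append] at this
    omega
  obtain ⟨a, rfl⟩ := List.length_eq_one_iff.mp hc
  have ha : a = z.1 := by
    simpa [h₂] using head?_word_bump_cons (hB.pos z (by simp)) B l
  subst ha
  refine ⟨hF.eq_of_word_bump_eq (by simpa using hk) ?_, ?_⟩
  · rw [h₁, ← hyz, word_bump_append_singleton]
  · refine (hB.eq_of_word_bump_eq (by simp) ?_).symm
    rw [h₂, word_bump_cons_zero]
    rfl

lemma IsRuns.straddle_of_word_cut_bump_eq_of_append {F B : Blocks} {x : Bool × ℕ}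
    (hbl : IsRuns (F ++ x :: B)) (hx : x.2 = 1) {i j : ℕ} (hip : i ≠ F.length)
    (hjp : j ≠ F.length) (hij : i < j) (hj : j < F.length + 1 + B.length)
    (h : word (cut (bump (F ++ x :: B) i) F.length) = word (cut (bump (F ++ x :: B) j) F.length)) :
    i + 1 = F.length ∧ j = F.length + 1 := by
  rcases lt_or_gt_of_ne hjp with hjF | hjF
  · rw [word_cut_bump_of_lt hx (hij.trans hjF), word_cut_bump_of_lt hx hjF] at h
    exact absurd (hbl.of_append_left.eq_of_word_bump_eq (hij.trans hjF)
      (List.append_cancel_right h)) hij.ne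
  obtain ⟨j, rfl⟩ : ∃ j', j = F.length + 1 + j' := ⟨j - F.length - 1, by omega⟩
  rw [word_cut_bump_of_gt hx] at h
  rcases lt_or_gt_of_ne hip with hiF | hiF
  · rw [word_cut_bump_of_lt hx hiF] at h
    obtain ⟨F, y, rfl⟩ : ∃ F' y, F = F' ++ [y] := by
      rcases List.eq_nil_or_concat F with rfl | ⟨F', y, rfl⟩
      · simp at hiF
      · exact ⟨F', y, List.concat_eq_append⟩
    obtain ⟨z, B, rfl⟩ : ∃ z B', B = z :: B' := by
      cases B with
      | nil => simp at hj; omega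
      | cons z B => exact ⟨z, B, rfl⟩
    have hyz : y.1 = z.1 := by
      have hc := hbl.chain.infix (l₁ := [y.1, x.1, z.1]) ⟨F.map Prod.fst, B.map Prod.fst, by simp⟩
      simp only [List.isChain_cons_cons, List.isChain_singleton, and_true] at hc
      revert hc
      cases y.1 <;> cases x.1 <;> cases z.1 <;> simp
    have := index_eq_of_word_bump_append_eq (F := F) hbl.of_append_left
      (hbl.of_append_right.of_append_right (l₁ := [x])) hyz (by simpa using hiF) h
    simp only [List.length_append, List.length_singleton] at this ⊢
    omega
  · obtain ⟨i, rfl⟩ : ∃ i', i = F.length + 1 + i' := ⟨i - F.length - 1, by omega⟩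
    rw [word_cut_bump_of_gt hx] at h
    have := (hbl.of_append_right.of_append_right (l₁ := [x])).eq_of_word_bump_eq
      (by simp at hj; omega) (List.append_cancel_left h)
    omega

/-- Removing a one-symbol block merges its two neighbours; this is the only way in which two
different bumps followed by the same cut can produce the same word. -/
lemma IsRuns.straddle_of_word_cut_bump_eq {bl : Blocks} (hbl : IsRuns bl) {p i j : ℕ}
    (hp : p < bl.length) (hip : i ≠ p) (hjp : j ≠ p) (hij : i < j) (hj : j < bl.length)
    (h : word (cut (bump bl i) p) = word (cut (bump bl j) p)) :
    bl[p].2 = 1 ∧ i + 1 = p ∧ j = p + 1 := by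
  by_cases h2 : 2 ≤ bl[p].2
  · rw [cut_bump_comm hip, cut_bump_comm hjp] at h
    exact absurd ((isRuns_cut hbl fun _ => h2).eq_of_word_bump_eq (by simp [cut]; omega) h)
      hij.ne
  obtain ⟨F, x, B, rfl, rfl⟩ : ∃ F x B, bl = F ++ x :: B ∧ F.length = p :=
    ⟨bl.take p, bl[p], bl.drop (p + 1), by rw [List.getElem_cons_drop, List.take_append_drop],
      by simp; omega⟩
  simp only [List.getElem_append_right (le_refl _), Nat.sub_self, List.getElem_cons_zero] at h2 ⊢
  have hx : x.2 = 1 := by have := hbl.pos x (by simp); omega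
  exact ⟨hx, hbl.straddle_of_word_cut_bump_eq_of_append hx hip hjp hij (by simp at hj; omega) h⟩

def instantiate (cs : List (Bool × ℕ∞)) (N : ℕ) : Blocks :=
  cs.map fun c => (c.1, if c.2 = ⊤ then N else c.2.toNat)

lemma clWord_eq_word (cs : List (Bool × ℕ∞)) (N : ℕ) : clWord cs N = word (instantiate cs N) := by
  simp [clWord, word, instantiate, Function.comp_def]

lemma clWord_mono (cs : List (Bool × ℕ∞)) {N M : ℕ} (h : N ≤ M) :
    clWord cs N <+ clWord cs M := by
  rw [clWord_eq_word, clWord_eq_word]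
  refine BlocksLE.word_sublist (List.forall₂_map_left_iff.mpr (List.forall₂_map_right_iff.mpr
    (List.forall₂_same.mpr fun c _ => ⟨rfl, ?_⟩)))
  split_ifs <;> simp [h]

lemma clWord_decAt {cs : List (Bool × ℕ∞)} {p : ℕ} (hp : p < cs.length)
    (hfin : (cs.getD p (true, 1)).2 ≠ ⊤) (N : ℕ) :
    clWord (decAt cs p) N = word (cut (instantiate cs N) p) := by
  rw [List.getD_eq_getElem?_getD, List.getElem?_eq_getElem hp, Option.getD_some] at hfin
  rw [clWord_eq_word, decAt, instantiate, List.map_set, cut, List.modify_eq_set]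
  have hsub : cs[p].2 - 1 ≠ ⊤ := fun h => hfin (by simpa using (ENat.sub_eq_top_iff.mp h).1)
  simp [List.getD_eq_getElem?_getD, hp, hfin, hsub, instantiate, ENat.toNat_sub ENat.one_ne_top]

lemma mem_Zcl_of_sublist {cs : List (Bool × ℕ∞)} {a b : BW} (hab : a <+ b) (hb : b ∈ Zcl cs) :
    a ∈ Zcl cs :=
  let ⟨N, hN⟩ := hb
  ⟨N, hab.trans hN⟩

/-- `bl` is a word `t[N₁, …, N_r]`: each infinite cluster of `cs` gets its own positive
multiplicity. -/
def IsInstance (cs : List (Bool × ℕ∞)) (bl : Blocks) : Prop :=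
  List.Forall₂ (fun c x => x.1 = c.1 ∧ 0 < x.2 ∧ (c.2 ≠ ⊤ → (x.2 : ℕ∞) = c.2)) cs bl

def infIdx (cs : List (Bool × ℕ∞)) : Finset ℕ :=
  (Finset.range cs.length).filter fun i => (cs.getD i (true, 1)).2 = ⊤

lemma mem_infIdx {cs : List (Bool × ℕ∞)} {i : ℕ} :
    i ∈ infIdx cs ↔ i < cs.length ∧ (cs.getD i (true, 1)).2 = ⊤ := by
  simp [infIdx]

lemma isInstance_instantiate {cs : List (Bool × ℕ∞)} (hpos : ∀ c ∈ cs, c.2 ≠ 0) {N : ℕ}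
    (hN : 0 < N) : IsInstance cs (instantiate cs N) := by
  refine List.forall₂_map_right_iff.mpr (List.forall₂_same.mpr fun c hc => ⟨rfl, ?_, ?_⟩)
  · split_ifs with h
    · exact hN
    · exact ENat.toNat_pos (hpos c hc) h
  · intro h
    simp [h]

namespace IsInstance

variable {cs : List (Bool × ℕ∞)} {bl : Blocks}

lemma length_eq (h : IsInstance cs bl) : cs.length = bl.length := List.Forall₂.length_eq h

lemma map_fst (h : IsInstance cs bl) : bl.map Prod.fst = cs.map Prod.fst := by
  induction h with
  | nil => rfl
  | cons hcx _ ih => simp [hcx.1, ih]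

lemma pos (h : IsInstance cs bl) : ∀ x ∈ bl, 0 < x.2 := by
  induction h with
  | nil => simp
  | cons hcx _ ih => exact List.forall_mem_cons.mpr ⟨hcx.2.1, ih⟩

lemma isRuns (h : IsInstance cs bl) (halt : cs.IsChain fun c d => c.1 ≠ d.1) : IsRuns bl :=
  ⟨by rw [h.map_fst, List.isChain_map]; exact halt, h.pos⟩

lemma natCast_getElem (h : IsInstance cs bl) {p : ℕ} (hp : p < bl.length)
    (hfin : (cs.getD p (true, 1)).2 ≠ ⊤) : ((bl[p].2 : ℕ) : ℕ∞) = (cs.getD p (true, 1)).2 := by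
  have hcs : p < cs.length := h.length_eq ▸ hp
  rw [List.getD_eq_getElem?_getD, List.getElem?_eq_getElem hcs] at hfin ⊢
  exact (List.Forall₂.get h hcs hp).2.2 hfin

lemma bump_of_top (h : IsInstance cs bl) {i : ℕ} (hi : (cs.getD i (true, 1)).2 = ⊤) :
    IsInstance cs (bump bl i) := by
  induction h generalizing i with
  | nil => simp [bump, IsInstance]
  | @cons c x cs bl hcx _ ih =>
    cases i with
    | zero => exact .cons ⟨hcx.1, Nat.succ_pos _, fun h => absurd (by simpa using hi) h⟩ ‹_›
    | succ i => exact .cons hcx (ih (by simpa using hi))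

lemma blocksLE_instantiate (h : IsInstance cs bl) {M : ℕ} (hM : ∀ x ∈ bl, x.2 ≤ M) :
    BlocksLE bl (instantiate cs M) := by
  induction h with
  | nil => exact .nil
  | @cons c x cs bl hcx _ ih =>
    refine .cons ⟨hcx.1, ?_⟩ (ih fun y hy => hM y (by simp [hy]))
    dsimp only
    split_ifs with hc
    · exact hM x (by simp)
    · simp [← hcx.2.2 hc]

lemma word_mem_Zcl (h : IsInstance cs bl) {l : Blocks} (hl : BlocksLE l bl) :
    word l ∈ Zcl cs :=
  ⟨(bl.map Prod.snd).sum, clWord_eq_word cs _ ▸ hl.word_sublist.trans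
    (h.blocksLE_instantiate fun _ hx => List.le_sum_of_mem (List.mem_map_of_mem hx)).word_sublist⟩

lemma exists_bump_of_coveredBy (h : IsInstance cs bl) (halt : cs.IsChain fun c d => c.1 ≠ d.1)
    {b : BW} (hb : b ∈ Zcl cs) (hcov : CoveredBy (word bl) b) :
    ∃ i ∈ infIdx cs, word (bump bl i) = b := by
  obtain ⟨M, hM⟩ := hb
  rw [clWord_eq_word] at hM
  obtain ⟨mid, hmid, rfl⟩ := exists_blocksLE_of_sublist_word hM
  have hle : BlocksLE bl mid := (h.isRuns halt).blocksLE_of_word_sublist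
    (by rw [h.map_fst, BlocksLE.map_fst hmid]; simp [instantiate]) hcov.1
  obtain ⟨i, hi, rfl⟩ := hle.exists_bump (by rw [← length_word, ← length_word]; exact hcov.2)
  refine ⟨i, mem_infIdx.mpr ⟨h.length_eq ▸ hi, ?_⟩, rfl⟩
  by_contra hfin
  have hcs : i < cs.length := h.length_eq ▸ hi
  have hmi := List.Forall₂.get hmid (by simpa [bump] using hi) (by simpa [instantiate] using hcs)
  have hbl := h.natCast_getElem hi hfin
  rw [List.getD_eq_getElem?_getD, List.getElem?_eq_getElem hcs, Option.getD_some] at hfin hbl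
  simp only [bump, instantiate, List.get_eq_getElem, List.getElem_modify_eq,
    List.getElem_map, ← hbl, ENat.natCast_ne_top, if_false, ENat.toNat_natCast] at hmi
  omega

lemma word_cut_bump_ne (h : IsInstance cs bl) (halt : cs.IsChain fun c d => c.1 ≠ d.1)
    {p i : ℕ} (hp : p < bl.length) (hip : i ≠ p) :
    word (cut (bump bl i) p) ≠ word bl := by
  intro heq
  have hle := (h.isRuns halt).blocksLE_of_word_sublist (hi := cut (bump bl i) p) (by simp)
    (by rw [heq])
  have hpos := h.pos _ (List.getElem_mem hp)
  have := (List.Forall₂.get hle hp (by simpa [cut, bump] using hp)).2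
  simp [cut, bump, hip] at this
  omega

end IsInstance

lemma IsInstance.injOn_word_cut_bump {t : Template} {bl : Blocks}
    (h : IsInstance t.clusters bl) {p : ℕ} (hp : IsFlangePos t p) :
    Set.InjOn (fun i => word (cut (bump bl i) p)) (infIdx t.clusters) := by
  have hne : ∀ i ∈ infIdx t.clusters, i ≠ p := fun i hi hip =>
    hp.2.1 (hip ▸ (mem_infIdx.mp hi).2)
  suffices key : ∀ i ∈ infIdx t.clusters, ∀ j ∈ infIdx t.clusters, i < j →
      word (cut (bump bl i) p) ≠ word (cut (bump bl j) p) by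
    intro i hi j hj hij
    rcases lt_trichotomy i j with hlt | rfl | hgt
    · exact absurd hij (key i hi j hj hlt)
    · rfl
    · exact absurd hij.symm (key j hj i hi hgt)
  intro i hi j hj hij heq
  have hlen := h.length_eq
  have hpbl : p < bl.length := hlen ▸ hp.1
  obtain ⟨hx, rfl, rfl⟩ := (h.isRuns t.alternating).straddle_of_word_cut_bump_eq hpbl
    (hne i hi) (hne j hj) hij (hlen ▸ (mem_infIdx.mp hj).1) heq
  refine hp.2.2 ⟨Nat.succ_pos i, (mem_infIdx.mp hj).1, ?_, by simpa using (mem_infIdx.mp hi).2,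
    (mem_infIdx.mp hj).2⟩
  rw [← h.natCast_getElem hpbl hp.2.1, hx, Nat.cast_one]

namespace HarmonicOn

variable {S : Set BW} {φ : BW → ℝ≥0∞}

lemma sum_le_of_coveredBy (hφ : HarmonicOn S φ) {a : BW} (ha : a ∈ S) {T : Finset BW}
    (hT : ∀ b ∈ T, b ∈ S ∧ CoveredBy a b) : ∑ b ∈ T, φ b ≤ φ a := by
  rw [hφ a ha]
  exact Finset.sum_le_sum_of_subset fun b hb => (Set.Finite.mem_toFinset _).mpr (hT b hb)

lemma le_sum_of_coveredBy (hφ : HarmonicOn S φ) {a : BW} (ha : a ∈ S) {ι : Type*}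
    {s : Finset ι} {g : ι → BW} (hg : ∀ b ∈ S, CoveredBy a b → ∃ i ∈ s, g i = b) :
    φ a ≤ ∑ i ∈ s, φ (g i) := by
  classical
  rw [hφ a ha]
  calc ∑ b ∈ upFinset S a, φ b ≤ ∑ b ∈ s.image g, φ b := by
        refine Finset.sum_le_sum_of_subset fun b hb => ?_
        obtain ⟨hbS, hcov⟩ := (Set.Finite.mem_toFinset _).mp hb
        obtain ⟨i, hi, rfl⟩ := hg b hbS hcov
        exact Finset.mem_image_of_mem g hi
    _ ≤ ∑ i ∈ s, φ (g i) := Finset.sum_image_le_of_nonneg fun _ _ => zero_le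

lemma le_of_sublist (hφ : HarmonicOn S φ) (hS : ∀ x y, x <+ y → y ∈ S → x ∈ S) {x y : BW}
    (h : x <+ y) (hy : y ∈ S) : φ y ≤ φ x := by
  suffices key : ∀ u, u ++ y ∈ S → φ (u ++ y) ≤ φ (u ++ x) by simpa using key [] hy
  clear hy
  induction h with
  | slnil => exact fun _ _ => le_rfl
  | @cons l₁ l₂ a _ ih =>
    intro u hu
    have hsub : u ++ l₂ <+ u ++ a :: l₂ := (List.sublist_cons_self a l₂).append_left u
    have hmem := hS _ _ hsub hu
    calc φ (u ++ a :: l₂) ≤ φ (u ++ l₂) := by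
          simpa using hφ.sum_le_of_coveredBy hmem (T := {u ++ a :: l₂})
            (by simpa using ⟨hu, hsub, by simp [Nat.add_assoc]⟩)
      _ ≤ φ (u ++ l₁) := ih u hmem
  | @cons_cons l₁ l₂ a _ ih => exact fun u hu => by simpa using ih (u ++ [a]) (by simpa using hu)

end HarmonicOn

lemma _root_.ENNReal.eq_top_of_forall_nat_mul_le {c x : ℝ≥0∞} (hc : c ≠ 0)
    (h : ∀ n : ℕ, n * c ≤ x) : x = ⊤ := by
  rw [eq_top_iff, ← ENNReal.top_mul hc, ← ENNReal.iSup_natCast, ENNReal.iSup_mul]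
  exact iSup_le h

section Instances

variable {t : Template} {φ : BW → ℝ≥0∞} {bl : Blocks}

lemma le_sum_word_bump (hφ : HarmonicOn (Zt t) φ) (hbl : IsInstance t.clusters bl) :
    φ (word bl) ≤ ∑ i ∈ infIdx t.clusters, φ (word (bump bl i)) :=
  hφ.le_sum_of_coveredBy (hbl.word_mem_Zcl (.refl bl)) fun _ hb hcov =>
    hbl.exists_bump_of_coveredBy t.alternating hb hcov

lemma add_sum_word_cut_bump_le (hφ : HarmonicOn (Zt t) φ) (hbl : IsInstance t.clusters bl)
    {p : ℕ} (hp : IsFlangePos t p) :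
    φ (word bl) + ∑ i ∈ infIdx t.clusters, φ (word (cut (bump bl i) p)) ≤ φ (word (cut bl p)) := by
  classical
  have hpbl : p < bl.length := hbl.length_eq ▸ hp.1
  have hne : ∀ i ∈ infIdx t.clusters, i ≠ p := fun i hi hip =>
    hp.2.1 (hip ▸ (mem_infIdx.mp hi).2)
  rw [← Finset.sum_image (hbl.injOn_word_cut_bump hp), ← Finset.sum_insert]
  · refine hφ.sum_le_of_coveredBy (hbl.word_mem_Zcl (blocksLE_cut bl p)) fun b hb => ?_
    rcases Finset.mem_insert.mp hb with rfl | hb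
    · refine ⟨hbl.word_mem_Zcl (.refl bl), ?_⟩
      conv_rhs => rw [← bump_cut (fun _ => hbl.pos _ (List.getElem_mem hpbl))]
      exact coveredBy_word_bump (by simpa [cut])
    · obtain ⟨i, hi, rfl⟩ := Finset.mem_image.mp hb
      refine ⟨(hbl.bump_of_top (mem_infIdx.mp hi).2).word_mem_Zcl (blocksLE_cut _ p), ?_⟩
      rw [cut_bump_comm (hne i hi)]
      exact coveredBy_word_bump (by simpa [cut, ← hbl.length_eq] using (mem_infIdx.mp hi).1)
  · intro hmem
    obtain ⟨i, hi, heq⟩ := Finset.mem_image.mp hmem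
    exact hbl.word_cut_bump_ne t.alternating hpbl (hne i hi) heq

lemma nat_mul_le_word_cut (hφ : HarmonicOn (Zt t) φ) {p : ℕ} (hp : IsFlangePos t p) (n : ℕ) :
    ∀ bl, IsInstance t.clusters bl → n * φ (word bl) ≤ φ (word (cut bl p)) := by
  induction n with
  | zero => simp
  | succ n ih =>
    intro bl hbl
    calc ((n + 1 : ℕ) : ℝ≥0∞) * φ (word bl) = φ (word bl) + n * φ (word bl) := by
          push_cast; ring
      _ ≤ φ (word bl) + ∑ i ∈ infIdx t.clusters, n * φ (word (bump bl i)) := by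
          rw [← Finset.mul_sum]; gcongr; exact le_sum_word_bump hφ hbl
      _ ≤ φ (word bl) + ∑ i ∈ infIdx t.clusters, φ (word (cut (bump bl i) p)) := by
          gcongr with i hi; exact ih _ (hbl.bump_of_top (mem_infIdx.mp hi).2)
      _ ≤ φ (word (cut bl p)) := add_sum_word_cut_bump_le hφ hbl hp

end Instances

theorem infinite_on_Jt_general (t : Template)
    (φ : BW → ℝ≥0∞) (hφ : HarmonicOn (Zt t) φ) (hpos : ∀ a ∈ Zt t, 0 < φ a) :
    ∀ a ∈ Jt t, φ a = ⊤ := by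
  rintro a ⟨p, hp, N, ha⟩
  have hbl := isInstance_instantiate t.pos N.succ_pos
  have hsub : a <+ word (cut (instantiate t.clusters (N + 1)) p) :=
    clWord_decAt hp.1 hp.2.1 (N + 1) ▸ ha.trans (clWord_mono _ N.le_succ)
  have htop : φ (word (cut (instantiate t.clusters (N + 1)) p)) = ⊤ :=
    ENNReal.eq_top_of_forall_nat_mul_le (hpos _ (hbl.word_mem_Zcl (.refl _))).ne'
      fun n => nat_mul_le_word_cut hφ hp n _ hbl
  exact top_le_iff.mp <| htop ▸
    hφ.le_of_sublist (fun _ _ => mem_Zcl_of_sublist) hsub (hbl.word_mem_Zcl (blocksLE_cut _ _))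

/-- Lemma 4.6 of the paper.  Let `t` be a semifinite template and
`φ` a strictly positive harmonic function on the graph `Z(t)`.  Then `φ(λ) = +∞`
for every `λ ∈ J(t)`. -/
theorem infinite_on_Jt (t : Template) (hsf : ¬t.IsFiniteTemplate)
    (φ : BW → ℝ≥0∞) (hφ : HarmonicOn (Zt t) φ) (hpos : ∀ a ∈ Zt t, 0 < φ a) :
    ∀ a ∈ Jt t, φ a = ⊤ :=
  infinite_on_Jt_general t φ hφ hpos

end Zigzag
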